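/- Solutions of the Wilson–Cowan equation depend continuously on their initial data: if ν and ν̃ are continuously differentiable maps ℝ≥0 → L²(D) satisfying τ ν′(t) = −ν(t) + F(ν(t), t) and τ ν̃′(t) = −ν̃(t) + F(ν̃(t), t) for all t ≥ 0, then for all t ≥ 0 one has ‖ν(t) − ν̃(t)‖_{L²(D)} ≤ exp((1 + L‖w‖_{L²(D×D)}) t / τ) ‖ν(0) − ν̃(0)‖_{L²(D)}. -/

import Mathlib

/-!
The vector field `a ↦ τ⁻¹ • (-a + F(a, t))` is Lipschitz in `a`, uniformly in `t`, with constant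
`(1 + L‖w‖) / τ`. Indeed, Cauchy–Schwarz on each slice `w x` and Tonelli bound the integral
operator with kernel `w` on `L²` by the Hilbert–Schmidt norm `‖w‖_{L²(D×D)}`, and composing with
the `L`-Lipschitz `f` costs a factor `L`. Grönwall's inequality for two trajectories of a Lipschitz
vector field then gives the exponential estimate.
-/

open MeasureTheory Set
open scoped NNReal ENNReal

namespace MeasureTheory

variable {α β E : Type*} [MeasurableSpace α] [MeasurableSpace β] {μ : Measure α} {ν : Measure β}
  [NormedAddCommGroup E] {p : ℝ≥0∞}

theorem eLpNorm_rpow_toReal_eq_lintegral (hp0 : p ≠ 0) (hp : p ≠ ∞) (f : α → E) :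
    eLpNorm f p μ ^ p.toReal = ∫⁻ x, ‖f x‖ₑ ^ p.toReal ∂μ := by
  rw [eLpNorm_eq_eLpNorm' hp0 hp, lintegral_rpow_enorm_eq_rpow_eLpNorm' (ENNReal.toReal_pos hp0 hp)]

theorem enorm_integral_mul_le {f g : α → ℝ} (hf : AEStronglyMeasurable f μ)
    (hg : AEStronglyMeasurable g μ) :
    ‖∫ x, f x * g x ∂μ‖ₑ ≤ eLpNorm f 2 μ * eLpNorm g 2 μ := by
  calc ‖∫ x, f x * g x ∂μ‖ₑ ≤ ∫⁻ x, ‖f x * g x‖ₑ ∂μ := enorm_integral_le_lintegral_enorm _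
    _ = eLpNorm (fun x => f x * g x) 1 μ := eLpNorm_one_eq_lintegral_enorm.symm
    _ ≤ eLpNorm f 2 μ * eLpNorm g 2 μ := by
      simpa using eLpNorm_le_eLpNorm_mul_eLpNorm'_of_norm (p := 2) (q := 2) hf hg (· * ·) 1
        (.of_forall fun x => by simp [norm_mul])

variable [SFinite ν] {W : α × β → E}

theorem lintegral_eLpNorm_prodMk_left_rpow (hW : AEStronglyMeasurable W (μ.prod ν)) (hp0 : p ≠ 0)
    (hp : p ≠ ∞) :
    ∫⁻ x, eLpNorm (fun y => W (x, y)) p ν ^ p.toReal ∂μ = eLpNorm W p (μ.prod ν) ^ p.toReal := by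
  simp_rw [eLpNorm_rpow_toReal_eq_lintegral hp0 hp]
  exact (lintegral_prod _ (hW.enorm.pow_const _)).symm

theorem MemLp.ae_memLp_prodMk_left (hW : MemLp W p (μ.prod ν)) (hp0 : p ≠ 0) (hp : p ≠ ∞) :
    ∀ᵐ x ∂μ, MemLp (fun y => W (x, y)) p ν := by
  have hfin : ∫⁻ x, ∫⁻ y, ‖W (x, y)‖ₑ ^ p.toReal ∂ν ∂μ ≠ ∞ := by
    rw [← lintegral_prod _ (hW.1.enorm.pow_const _)]
    exact (lintegral_rpow_enorm_lt_top_of_eLpNorm_lt_top hp0 hp hW.2).ne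
  filter_upwards [hW.1.prodMk_left, ae_lt_top' (hW.1.enorm.pow_const _).lintegral_prod_right' hfin]
    with x hmeas hslice
  exact ⟨hmeas, (eLpNorm_lt_top_iff_lintegral_rpow_enorm_lt_top hp0 hp).2 hslice⟩

theorem eLpNorm_integral_mul_le {w : α → β → ℝ}
    (hw : AEStronglyMeasurable (fun q : α × β => w q.1 q.2) (μ.prod ν)) {u : β → ℝ}
    (hu : MemLp u 2 ν) :
    eLpNorm (fun x => ∫ y, w x y * u y ∂ν) 2 μ ≤
      eLpNorm (fun q : α × β => w q.1 q.2) 2 (μ.prod ν) * eLpNorm u 2 ν := by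
  set r : ℝ := (2 : ℝ≥0∞).toReal
  have hr : 0 < r := by norm_num [r]
  rw [← ENNReal.rpow_le_rpow_iff hr]
  calc eLpNorm (fun x => ∫ y, w x y * u y ∂ν) 2 μ ^ r
      = ∫⁻ x, ‖∫ y, w x y * u y ∂ν‖ₑ ^ r ∂μ :=
        eLpNorm_rpow_toReal_eq_lintegral two_ne_zero ENNReal.ofNat_ne_top _
    _ ≤ ∫⁻ x, (eLpNorm (w x) 2 ν * eLpNorm u 2 ν) ^ r ∂μ := by
        refine lintegral_mono_ae ?_
        filter_upwards [hw.prodMk_left] with x hx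
        gcongr
        exact enorm_integral_mul_le hx hu.1
    _ = (∫⁻ x, eLpNorm (w x) 2 ν ^ r ∂μ) * eLpNorm u 2 ν ^ r := by
        simp_rw [ENNReal.mul_rpow_of_nonneg _ _ hr.le]
        exact lintegral_mul_const' _ _ (ENNReal.rpow_ne_top_of_nonneg hr.le hu.2.ne)
    _ = (eLpNorm (fun q : α × β => w q.1 q.2) 2 (μ.prod ν) * eLpNorm u 2 ν) ^ r := by
        rw [lintegral_eLpNorm_prodMk_left_rpow hw two_ne_zero ENNReal.ofNat_ne_top,
          ENNReal.mul_rpow_of_nonneg _ _ hr.le]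

theorem lipschitzWith_of_ae_eq_comp_integral_mul {f : ℝ → ℝ} {L : ℝ≥0}
    (hf : LipschitzWith L f) {w : α → β → ℝ}
    (hw : MemLp (fun q : α × β => w q.1 q.2) 2 (μ.prod ν)) (k : α → ℝ)
    {F : Lp ℝ 2 ν → Lp ℝ 2 μ} (hF : ∀ g, F g =ᵐ[μ] fun x => f ((∫ y, w x y * g y ∂ν) + k x)) :
    LipschitzWith (L * (eLpNorm (fun q : α × β => w q.1 q.2) 2 (μ.prod ν)).toNNReal) F := by
  refine LipschitzWith.of_dist_le_mul fun g h => ?_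
  -- The integral is linear in `g` only where the slice `w x` is square integrable, hence a.e.
  have hpt : ∀ᵐ x ∂μ, ‖(F g - F h) x‖ₑ ≤ L * ‖∫ y, w x y * (g - h) y ∂ν‖ₑ := by
    filter_upwards [hw.ae_memLp_prodMk_left two_ne_zero ENNReal.ofNat_ne_top, hF g, hF h,
      Lp.coeFn_sub (F g) (F h)] with x hx hgx hhx hsub
    have hwg : Integrable (fun y => w x y * g y) ν := hx.integrable_mul (Lp.memLp g)
    have hwh : Integrable (fun y => w x y * h y) ν := hx.integrable_mul (Lp.memLp h)
    have hlin : ∫ y, w x y * (g - h) y ∂ν = (∫ y, w x y * g y ∂ν) - ∫ y, w x y * h y ∂ν := by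
      rw [← integral_sub hwg hwh]
      refine integral_congr_ae ?_
      filter_upwards [Lp.coeFn_sub g h] with y hy
      rw [hy, Pi.sub_apply, mul_sub]
    rw [hsub, Pi.sub_apply, hgx, hhx, hlin, ← edist_eq_enorm_sub, ← edist_eq_enorm_sub]
    simpa [edist_dist] using
      hf.edist_le_mul ((∫ y, w x y * g y ∂ν) + k x) ((∫ y, w x y * h y ∂ν) + k x)
  have hbound : eLpNorm (F g - F h) 2 μ ≤
      L * (eLpNorm (fun q : α × β => w q.1 q.2) 2 (μ.prod ν) * eLpNorm (g - h) 2 ν) := by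
    refine (eLpNorm_le_nnreal_smul_eLpNorm_of_ae_le_mul' hpt 2).trans ?_
    rw [ENNReal.smul_def, smul_eq_mul]
    gcongr
    exact eLpNorm_integral_mul_le hw.1 (Lp.memLp (g - h))
  rw [dist_eq_norm, dist_eq_norm, Lp.norm_def, Lp.norm_def]
  refine (ENNReal.toReal_mono ?_ hbound).trans_eq ?_
  · finiteness [hw.2, Lp.eLpNorm_lt_top (g - h)]
  · simp [ENNReal.toReal_mul, ENNReal.coe_toNNReal_eq_toReal, mul_assoc]

end MeasureTheory

theorem LipschitzWith.const_smul_neg_add {𝕜 E : Type*} [NormedField 𝕜] [NormedAddCommGroup E]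
    [NormedSpace 𝕜 E] {K : ℝ≥0} {φ : E → E} (hφ : LipschitzWith K φ) (c : 𝕜) :
    LipschitzWith (‖c‖₊ * (1 + K)) fun a => c • (-a + φ a) :=
  (lipschitzWith_smul c).comp (LipschitzWith.id.neg.add hφ)

theorem dist_le_of_trajectories_ODE_Ici {E : Type*} [NormedAddCommGroup E] [NormedSpace ℝ E]
    {v : ℝ → E → E} {K : ℝ≥0} (hv : ∀ t, LipschitzWith K (v t)) {f g : ℝ → E}
    (hf : ∀ t ∈ Ici (0 : ℝ), HasDerivWithinAt f (v t (f t)) (Ici 0) t)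
    (hg : ∀ t ∈ Ici (0 : ℝ), HasDerivWithinAt g (v t (g t)) (Ici 0) t) :
    ∀ t ∈ Ici (0 : ℝ), dist (f t) (g t) ≤ dist (f 0) (g 0) * Real.exp (K * t) := by
  intro t ht
  have hcont {u : ℝ → E} (hu : ∀ t ∈ Ici (0 : ℝ), HasDerivWithinAt u (v t (u t)) (Ici 0) t) :
      ContinuousOn u (Icc 0 t) := fun s hs =>
    (hu s hs.1).continuousWithinAt.mono Icc_subset_Ici_self
  simpa using dist_le_of_trajectories_ODE hv (hcont hf)
    (fun s hs => (hf s hs.1).mono (Ici_subset_Ici.2 hs.1)) (hcont hg)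
    (fun s hs => (hg s hs.1).mono (Ici_subset_Ici.2 hs.1)) le_rfl t ⟨ht, le_rfl⟩

theorem wilson_cowan_continuous_dependence_general
    {d : ℕ} (D : Set (EuclideanSpace ℝ (Fin d)))
    (f : ℝ → ℝ) (L : ℝ≥0) (hfLip : LipschitzWith L f)
    (w : EuclideanSpace ℝ (Fin d) → EuclideanSpace ℝ (Fin d) → ℝ)
    (hw : MemLp (fun p : EuclideanSpace ℝ (Fin d) × EuclideanSpace ℝ (Fin d) => w p.1 p.2) 2
      ((volume.restrict D).prod (volume.restrict D)))
    (I : ℝ → Lp ℝ 2 (volume.restrict D))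
    (F : Lp ℝ 2 (volume.restrict D) → ℝ → Lp ℝ 2 (volume.restrict D))
    (hF : ∀ (g : Lp ℝ 2 (volume.restrict D)) (t : ℝ),
      (F g t : EuclideanSpace ℝ (Fin d) → ℝ) =ᵐ[volume.restrict D]
        fun x => f ((∫ y in D, w x y * g y) + I t x))
    (τ : ℝ) (hτ : 0 < τ)
    (ν ν' : ℝ → Lp ℝ 2 (volume.restrict D))
    (hν : ∀ t ∈ Set.Ici (0 : ℝ),
      HasDerivWithinAt ν (τ⁻¹ • (-ν t + F (ν t) t)) (Set.Ici 0) t)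
    (hν' : ∀ t ∈ Set.Ici (0 : ℝ),
      HasDerivWithinAt ν' (τ⁻¹ • (-ν' t + F (ν' t) t)) (Set.Ici 0) t) :
    ∀ t ∈ Set.Ici (0 : ℝ),
      ‖ν t - ν' t‖ ≤
        Real.exp ((1 + (L : ℝ) * (eLpNorm
            (fun p : EuclideanSpace ℝ (Fin d) × EuclideanSpace ℝ (Fin d) => w p.1 p.2) 2
            ((volume.restrict D).prod (volume.restrict D))).toReal) * t / τ) *
          ‖ν 0 - ν' 0‖ := by
  intro t ht
  have hfield (s : ℝ) := (lipschitzWith_of_ae_eq_comp_integral_mul hfLip hw (I s)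
    fun g => hF g s).const_smul_neg_add τ⁻¹
  have hgronwall := dist_le_of_trajectories_ODE_Ici hfield hν hν' t ht
  rw [dist_eq_norm, dist_eq_norm, mul_comm] at hgronwall
  convert hgronwall using 3
  push_cast
  rw [Real.norm_of_nonneg (inv_nonneg.2 hτ.le)]
  ring

/-- Continuous dependence on initial data for the Wilson–Cowan equation:
if `ν` and `ν̃` are C¹ solutions of `τ ν' = −ν + F(ν,t)` on `ℝ≥0`, then
`‖ν(t) − ν̃(t)‖ ≤ exp((1 + L‖w‖_{L²(D×D)}) t / τ) ‖ν(0) − ν̃(0)‖` for all `t ≥ 0`. -/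
theorem wilson_cowan_continuous_dependence
    {d : ℕ} (D : Set (EuclideanSpace ℝ (Fin d)))
    (hDmeas : MeasurableSet D) (hDbdd : Bornology.IsBounded D)
    (f : ℝ → ℝ) (L : ℝ≥0) (hfLip : LipschitzWith L f)
    (M : ℝ) (hfBdd : ∀ z : ℝ, |f z| ≤ M)
    (w : EuclideanSpace ℝ (Fin d) → EuclideanSpace ℝ (Fin d) → ℝ)
    (hw : MemLp (fun p : EuclideanSpace ℝ (Fin d) × EuclideanSpace ℝ (Fin d) => w p.1 p.2) 2
      ((volume.restrict D).prod (volume.restrict D)))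
    (I : ℝ → Lp ℝ 2 (volume.restrict D)) (hI : ContinuousOn I (Set.Ici 0))
    (F : Lp ℝ 2 (volume.restrict D) → ℝ → Lp ℝ 2 (volume.restrict D))
    (hF : ∀ (g : Lp ℝ 2 (volume.restrict D)) (t : ℝ),
      (F g t : EuclideanSpace ℝ (Fin d) → ℝ) =ᵐ[volume.restrict D]
        fun x => f ((∫ y in D, w x y * g y) + I t x))
    (τ : ℝ) (hτ : 0 < τ)
    (ν ν' : ℝ → Lp ℝ 2 (volume.restrict D))
    (hν : ∀ t ∈ Set.Ici (0 : ℝ),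
      HasDerivWithinAt ν (τ⁻¹ • (-ν t + F (ν t) t)) (Set.Ici 0) t)
    (hν' : ∀ t ∈ Set.Ici (0 : ℝ),
      HasDerivWithinAt ν' (τ⁻¹ • (-ν' t + F (ν' t) t)) (Set.Ici 0) t) :
    ∀ t ∈ Set.Ici (0 : ℝ),
      ‖ν t - ν' t‖ ≤
        Real.exp ((1 + (L : ℝ) * (eLpNorm
            (fun p : EuclideanSpace ℝ (Fin d) × EuclideanSpace ℝ (Fin d) => w p.1 p.2) 2
            ((volume.restrict D).prod (volume.restrict D))).toReal) * t / τ) *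
          ‖ν 0 - ν' 0‖ :=
  wilson_cowan_continuous_dependence_general D f L hfLip w hw I F hF τ hτ ν ν' hν hν'
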